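/- Let E : V_{x_1} ⊗ ⋯ ⊗ V_{x_k} ⊗ V_a → V_{y_1} ⊗ ⋯ ⊗ V_{y_{k+1}} be the elementary light ladder attached to the data 0 ≤ y_1 < x_1 < y_2 < ⋯ < x_k < y_{k+1} ≤ n, and write X = x_{[1,x_1]} ⊗ ⋯ ⊗ x_{[1,x_k]}. Then for every A ⊆ {1,…,n} with |A| = a: (i) if |A ∩ [1,x_i]| > α_i for some 1 ≤ i ≤ k, then E(X ⊗ x_A) = 0; (ii) E(X ⊗ x_M) = ε q^z · x_{[1,y_1]} ⊗ ⋯ ⊗ x_{[1,y_{k+1}]} for some sign ε ∈ {±1} and z ∈ ℤ; (iii) if A ≠ M, then the coefficient of x_{[1,y_1]} ⊗ ⋯ ⊗ x_{[1,y_{k+1}]} in E(X ⊗ x_A) is zero. -/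
import Mathlib


noncomputable section

/-- The base ring `R = ℤ[q,q⁻¹]`. -/
abbrev R := LaurentPolynomial ℤ

/-- Index type for the basis of the "big" free module `⊕_p V_p`: all subsets of `{1,…,n}`. -/
abbrev F (n : ℕ) := Finset (Fin n)

/-- The free `R`-module `⊕_p V_p` with basis `x_S` for `S ⊆ {1,…,n}`; the submodule spanned
by the `x_S` with `|S| = p` is `V_p`. -/
abbrev Big (n : ℕ) := F n →₀ R

/-- The model of `(⊕ V_p) ⊗ (⊕ V_r)`, free on pairs of subsets. -/
abbrev Big2 (n : ℕ) := (F n × F n) →₀ R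

/-- The model of a `d`-fold tensor product, free on `d`-tuples of subsets. -/
abbrev BigD (n d : ℕ) := (Fin d → F n) →₀ R

/-- `ℓ(S,T) = #{(i,j) ∈ S × T : i < j}`. -/
def ell {n : ℕ} (S T : F n) : ℕ := ((S ×ˢ T).filter (fun p => p.1 < p.2)).card

/-- `(−q)^z` for `z : ℤ`. -/
def negqpow (z : ℤ) : R := (-1 : R) ^ z.natAbs * LaurentPolynomial.T z

/-- The merge map `M` : `x_S ⊗ x_T ↦ (−q)^{ℓ(S,T)} x_{S ∪ T}` if `S ∩ T = ∅`, else `0`.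
On the graded piece `V_a ⊗ V_b` this is `M_{a,b}`. -/
def mergeMap (n : ℕ) : Big2 n →ₗ[R] Big n :=
  Finsupp.lift (Big n) R (F n × F n)
    (fun p => if Disjoint p.1 p.2
      then Finsupp.single (p.1 ∪ p.2) (negqpow (ell p.1 p.2)) else 0)

/-- The split map taking the second tensor factor of size `c`:
`x_S ↦ (−1)^{(|S|−c)·c} Σ_{T ⊆ S, |T| = |S|−c} (−q)^{−ℓ(S∖T,T)} x_T ⊗ x_{S∖T}`.
On the graded piece `V_{a+c}` this is `M'_{a,c}`. -/
def splitR (n c : ℕ) : Big n →ₗ[R] Big2 n :=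
  Finsupp.lift (Big2 n) R (F n)
    (fun S => ((-1 : R) ^ ((S.card - c) * c)) •
      ∑ T ∈ S.powersetCard (S.card - c),
        Finsupp.single (T, S \ T) (negqpow (-(ell (S \ T) T : ℤ))))

/-- The split map taking the first tensor factor of size `c`:
`x_S ↦ (−1)^{c·(|S|−c)} Σ_{T ⊆ S, |T| = c} (−q)^{−ℓ(S∖T,T)} x_T ⊗ x_{S∖T}`.
On the graded piece `V_{c+b}` this is `M'_{c,b}`. -/
def splitL (n c : ℕ) : Big n →ₗ[R] Big2 n :=
  Finsupp.lift (Big2 n) R (F n)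
    (fun S => ((-1 : R) ^ (c * (S.card - c))) •
      ∑ T ∈ S.powersetCard c,
        Finsupp.single (T, S \ T) (negqpow (-(ell (S \ T) T : ℤ))))

/-- `f ⊗ id` in the free-module model. -/
def tensorId {α α' β : Type} (f : (α →₀ R) →ₗ[R] (α' →₀ R)) :
    ((α × β) →₀ R) →ₗ[R] ((α' × β) →₀ R) :=
  Finsupp.lift _ R _
    (fun p => Finsupp.mapDomain (fun a => (a, p.2)) (f (Finsupp.single p.1 1)))

/-- `id ⊗ f` in the free-module model. -/
def idTensor {α β β' : Type} (f : (β →₀ R) →ₗ[R] (β' →₀ R)) :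
    ((α × β) →₀ R) →ₗ[R] ((α × β') →₀ R) :=
  Finsupp.lift _ R _
    (fun p => Finsupp.mapDomain (fun b => (p.1, b)) (f (Finsupp.single p.2 1)))

/-- The canonical associator of the free-module model. -/
def assocMap (α β γ : Type) : (((α × β) × γ) →₀ R) ≃ₗ[R] ((α × (β × γ)) →₀ R) :=
  Finsupp.domLCongr (Equiv.prodAssoc α β γ)

/-- The northeast rung map `R^{NE}_c = (id ⊗ M_{c,r}) ∘ (M'_{p−c,c} ⊗ id) :
V_p ⊗ V_r → V_{p−c} ⊗ V_{r+c}` (assembled over all graded pieces). -/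
def rungNE (n c : ℕ) : Big2 n →ₗ[R] Big2 n :=
  (idTensor (mergeMap n)) ∘ₗ (assocMap (F n) (F n) (F n)).toLinearMap
    ∘ₗ (tensorId (splitR n c))

/-- The northwest rung map `R^{NW}_c = (M_{p,c} ⊗ id) ∘ (id ⊗ M'_{c,r−c}) :
V_p ⊗ V_r → V_{p+c} ⊗ V_{r−c}` (assembled over all graded pieces). -/
def rungNW (n c : ℕ) : Big2 n →ₗ[R] Big2 n :=
  (tensorId (mergeMap n)) ∘ₗ (assocMap (F n) (F n) (F n)).symm.toLinearMap
    ∘ₗ (idTensor (splitL n c))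

/-- Apply a two-factor map `g` at the adjacent tensor positions `i, i+1` of a `d`-fold
tensor product: `id^{⊗i} ⊗ g ⊗ id^{⊗(d−i−2)}` (the identity if `i+1 ≥ d`). -/
def atPos (n d i : ℕ) (g : Big2 n →ₗ[R] Big2 n) : BigD n d →ₗ[R] BigD n d :=
  if h : i + 1 < d then
    Finsupp.lift (BigD n d) R (Fin d → F n)
      (fun f => Finsupp.mapDomain
        (fun p => Function.update (Function.update f ⟨i, Nat.lt_of_succ_lt h⟩ p.1) ⟨i + 1, h⟩ p.2)
        (g (Finsupp.single (f ⟨i, Nat.lt_of_succ_lt h⟩, f ⟨i + 1, h⟩) 1)))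
  else LinearMap.id

/-- The subset of `Fin n` corresponding (0-based) to the 1-based interval
`(a, b] ⊆ {1,…,n}` (so `[1,m]` is `ico n 0 m`). -/
def ico (n a b : ℕ) : F n :=
  Finset.univ.filter (fun j => a ≤ (j : ℕ) ∧ (j : ℕ) < b)

end

/-- The cumulative counts `α` of the elementary light ladder data (0-based:
`alphaF y x i` is `α_{i+1}` of the paper): `α_1 = y_1`, `α_{i+1} = α_i + (y_{i+1} − x_i)`;
here `y i`, `x i` (0-based) are `y_{i+1}`, `x_{i+1}`, and `a = alphaF y x k`. -/
def alphaF (y x : ℕ → ℕ) : ℕ → ℕ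
  | 0 => y 0
  | (i + 1) => alphaF y x i + (y (i + 1) - x i)



section Aux
noncomputable section
open LaurentPolynomial in
/-- unit monomials -/
def IsUnitMon (r : R) : Prop := ∃ ε z : ℤ, (ε = 1 ∨ ε = -1) ∧ r = LaurentPolynomial.C ε * LaurentPolynomial.T z

lemma isUnitMon_neg_one_pow (m : ℕ) : IsUnitMon ((-1 : R) ^ m) := by
  refine ⟨(-1)^m, 0, ?_, ?_⟩
  · rcases Nat.even_or_odd m with h | h
    · left; exact h.neg_one_pow
    · right; exact h.neg_one_pow
  · simp [map_pow]

lemma isUnitMon_negqpow (z : ℤ) : IsUnitMon (negqpow z) := by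
  refine ⟨(-1)^z.natAbs, z, ?_, ?_⟩
  · rcases Nat.even_or_odd z.natAbs with h | h
    · left; exact h.neg_one_pow
    · right; exact h.neg_one_pow
  · simp [negqpow, map_pow]

lemma IsUnitMon.mul {r s : R} (hr : IsUnitMon r) (hs : IsUnitMon s) : IsUnitMon (r * s) := by
  obtain ⟨e, z, he, rfl⟩ := hr
  obtain ⟨e', z', he', rfl⟩ := hs
  refine ⟨e * e', z + z', ?_, ?_⟩
  · rcases he with rfl | rfl <;> rcases he' with rfl | rfl <;> simp
  · rw [LaurentPolynomial.T_add, map_mul]; ring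

lemma isUnitMon_one : IsUnitMon 1 := ⟨1, 0, Or.inl rfl, by simp⟩

variable {m : ℕ}
lemma lift_single {X : Type*} {M : Type*} [AddCommMonoid M] [Module R M] (f : X → M) (x : X) (r : R) :
    (Finsupp.lift M R X f) (Finsupp.single x r) = r • f x := by
  simp [Finsupp.lift_apply, Finsupp.sum_single_index]

/-- the scalar appearing in a rung term -/
def Cf (c : ℕ) (S T B : Finset (Fin m)) : R :=
  (-1:R) ^ ((S.card - c) * c) * negqpow (-(ell (S \ T) T : ℤ)) * negqpow (ell (S \ T) B)

lemma isUnitMon_Cf (c : ℕ) (S T B : Finset (Fin m)) : IsUnitMon (Cf c S T B) :=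
  ((isUnitMon_neg_one_pow _).mul (isUnitMon_negqpow _)).mul (isUnitMon_negqpow _)

lemma rungNE_single (n c : ℕ) (S B : F n) :
    rungNE n c (Finsupp.single (S, B) 1) =
      ∑ T ∈ S.powersetCard (S.card - c),
        (if Disjoint (S \ T) B then
          Finsupp.single (T, (S \ T) ∪ B) (Cf c S T B)
         else 0) := by
  simp only [rungNE, LinearMap.comp_apply, tensorId, idTensor, lift_single, one_smul]
  simp only [splitR, lift_single, one_smul, Finsupp.mapDomain_smul, Finsupp.mapDomain_finset_sum,
    Finsupp.mapDomain_single, map_smul, map_sum, assocMap, Finsupp.domLCongr_apply,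
    LinearEquiv.coe_coe, Finsupp.domCongr_apply, Finsupp.equivMapDomain_single,
    Equiv.prodAssoc_apply, mergeMap]
  rw [Finset.smul_sum]
  refine Finset.sum_congr rfl (fun T hT => ?_)
  split_ifs with h
  · rw [Finsupp.mapDomain_single, smul_comm, Finsupp.smul_single, Finsupp.smul_single,
      smul_eq_mul, smul_eq_mul, Cf]
    ring_nf
  · simp

lemma atPos_rungNE_single (n d i c : ℕ) (h : i + 1 < d) (f : Fin d → F n) :
    atPos n d i (rungNE n c) (Finsupp.single f 1) =
      ∑ T ∈ (f ⟨i, Nat.lt_of_succ_lt h⟩).powersetCard ((f ⟨i, Nat.lt_of_succ_lt h⟩).card - c),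
        (if Disjoint (f ⟨i, Nat.lt_of_succ_lt h⟩ \ T) (f ⟨i + 1, h⟩) then
          Finsupp.single
            (Function.update (Function.update f ⟨i, Nat.lt_of_succ_lt h⟩ T) ⟨i + 1, h⟩
              ((f ⟨i, Nat.lt_of_succ_lt h⟩ \ T) ∪ f ⟨i + 1, h⟩))
            (Cf c (f ⟨i, Nat.lt_of_succ_lt h⟩) T (f ⟨i + 1, h⟩))
         else 0) := by
  rw [atPos, dif_pos h, lift_single, one_smul, rungNE_single, Finsupp.mapDomain_finset_sum]
  refine Finset.sum_congr rfl (fun T hT => ?_)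
  split_ifs with hd
  · rw [Finsupp.mapDomain_single]
  · simp

lemma support_transfer {ι ι' : Type*} [DecidableEq ι'] (Φ : (ι →₀ R) →ₗ[R] (ι' →₀ R)) (v : ι →₀ R) (Pp : ι' → Prop)
    (h : ∀ g ∈ v.support, ∀ g' ∈ (Φ (Finsupp.single g 1)).support, Pp g') :
    ∀ g' ∈ (Φ v).support, Pp g' := by
  have hv : v = ∑ g ∈ v.support, (v g) • Finsupp.single g (1:R) := by
    simp only [Finsupp.smul_single, smul_eq_mul, mul_one]
    conv_lhs => rw [← Finsupp.sum_single v]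
    rfl
  intro g' hg'
  rw [hv, map_sum] at hg'
  have := Finset.mem_biUnion.mp (Finsupp.support_finset_sum hg')
  obtain ⟨g, hg, hmem⟩ := this
  rw [map_smul] at hmem
  exact h g hg g' (Finsupp.support_smul hmem)

lemma apply_eq_zero_of_single {ι ι' : Type*} (Φ : (ι →₀ R) →ₗ[R] (ι' →₀ R)) (v : ι →₀ R)
    (h : ∀ g ∈ v.support, Φ (Finsupp.single g 1) = 0) : Φ v = 0 := by
  have hv : v = ∑ g ∈ v.support, (v g) • Finsupp.single g (1:R) := by
    simp only [Finsupp.smul_single, smul_eq_mul, mul_one]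
    conv_lhs => rw [← Finsupp.sum_single v]
    rfl
  rw [hv, map_sum]
  refine Finset.sum_eq_zero (fun g hg => ?_)
  rw [map_smul, h g hg, smul_zero]

def Mset (n : ℕ) (y x : ℕ → ℕ) (j : ℕ) : F n :=
  ico n 0 (y 0) ∪ (Finset.range j).biUnion (fun i => ico n (x i) (y (i + 1)))

lemma mem_ico {n a b : ℕ} (v : Fin n) : v ∈ ico n a b ↔ a ≤ (v:ℕ) ∧ (v:ℕ) < b := by
  simp [ico]

lemma card_ico {n a b : ℕ} (h : b ≤ n) : (ico n a b).card = b - a := by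
  have himg : Finset.image Fin.val (ico n a b) = Finset.Ico a b := by
    ext v
    simp only [Finset.mem_image, mem_ico, Finset.mem_Ico]
    constructor
    · rintro ⟨j, hj, rfl⟩; exact hj
    · rintro ⟨h1, h2⟩; exact ⟨⟨v, lt_of_lt_of_le h2 h⟩, ⟨h1, h2⟩, rfl⟩
  have := Finset.card_image_of_injective (ico n a b) Fin.val_injective
  rw [himg] at this
  rw [← this, Nat.card_Ico]

lemma mem_Mset {n : ℕ} {y x : ℕ → ℕ} {j : ℕ} (v : Fin n) :
    v ∈ Mset n y x j ↔ (v:ℕ) < y 0 ∨ ∃ i < j, x i ≤ (v:ℕ) ∧ (v:ℕ) < y (i + 1) := by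
  simp [Mset, mem_ico]

lemma Mset_zero (n : ℕ) (y x : ℕ → ℕ) : Mset n y x 0 = ico n 0 (y 0) := by
  simp [Mset]

lemma Mset_succ (n : ℕ) (y x : ℕ → ℕ) (j : ℕ) :
    Mset n y x (j + 1) = Mset n y x j ∪ ico n (x j) (y (j + 1)) := by
  ext v
  simp only [mem_Mset, Finset.mem_union, mem_ico]
  constructor
  · rintro (h | ⟨i, hi, h⟩)
    · exact Or.inl (Or.inl h)
    · rcases Nat.lt_succ_iff_lt_or_eq.mp hi with hi' | rfl
      · exact Or.inl (Or.inr ⟨i, hi', h⟩)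
      · exact Or.inr h
  · rintro ((h | ⟨i, hi, h⟩) | h)
    · exact Or.inl h
    · exact Or.inr ⟨i, Nat.lt_succ_of_lt hi, h⟩
    · exact Or.inr ⟨j, Nat.lt_succ_self j, h⟩

section ladder
variable {n k : ℕ} {y x : ℕ → ℕ}
variable (hyx : ∀ i < k, y i < x i) (hxy : ∀ i < k, x i < y (i + 1)) (hyn : y k ≤ n)
include hyx hxy

lemma y_le_y : ∀ {i j : ℕ}, i ≤ j → j ≤ k → y i ≤ y j := by
  intro i j hij hjk
  induction j with
  | zero => have : i = 0 := Nat.le_zero.mp hij; subst this; exact le_refl _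
  | succ j ih =>
    rcases Nat.le_succ_iff.mp hij with h | rfl
    · calc y i ≤ y j := ih h (by omega)
        _ ≤ x j := le_of_lt (hyx j (by omega))
        _ ≤ y (j + 1) := le_of_lt (hxy j (by omega))
    · rfl

include hyn

lemma y_le_n {j : ℕ} (hj : j ≤ k) : y j ≤ n := le_trans (y_le_y hyx hxy hj (le_refl k)) hyn

lemma x_le_n {j : ℕ} (hj : j < k) : x j ≤ n :=
  le_trans (le_of_lt (hxy j hj)) (y_le_n hyx hxy hyn hj)

omit hyn

lemma alpha_le_y : ∀ {j : ℕ}, j ≤ k → alphaF y x j ≤ y j := by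
  intro j hj
  induction j with
  | zero => exact le_of_eq rfl
  | succ j ih =>
    have h1 : alphaF y x j ≤ y j := ih (by omega)
    have h2 : y j < x j := hyx j (by omega)
    have h3 : x j < y (j + 1) := hxy j (by omega)
    show alphaF y x j + (y (j+1) - x j) ≤ y (j+1)
    omega

lemma alpha_le_x {j : ℕ} (hj : j < k) : alphaF y x j ≤ x j :=
  le_trans (alpha_le_y hyx hxy hj.le) (le_of_lt (hyx j hj))

lemma Mset_subset_y {j : ℕ} (hj : j ≤ k) : Mset n y x j ⊆ ico n 0 (y j) := by
  intro v hv
  rw [mem_Mset] at hv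
  rw [mem_ico]
  rcases hv with h | ⟨i, hi, h1, h2⟩
  · exact ⟨Nat.zero_le _, lt_of_lt_of_le h (y_le_y hyx hxy (Nat.zero_le j) hj)⟩
  · exact ⟨Nat.zero_le _, lt_of_lt_of_le h2 (y_le_y hyx hxy (by omega) hj)⟩

lemma Mset_subset_x {j : ℕ} (hj : j < k) : Mset n y x j ⊆ ico n 0 (x j) := by
  refine (Mset_subset_y hyx hxy hj.le).trans (fun v hv => ?_)
  rw [mem_ico] at hv ⊢
  exact ⟨hv.1, lt_of_lt_of_le hv.2 (le_of_lt (hyx j hj))⟩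

include hyn

lemma card_Mset : ∀ {j : ℕ}, j ≤ k → (Mset n y x j).card = alphaF y x j := by
  intro j hj
  induction j with
  | zero => rw [Mset_zero]; exact (card_ico (y_le_n hyx hxy hyn (Nat.zero_le k))).trans (by simp [alphaF])
  | succ j ih =>
    rw [Mset_succ, Finset.card_union_of_disjoint, ih (by omega),
      card_ico (y_le_n hyx hxy hyn (by omega))]
    · rfl
    · rw [Finset.disjoint_left]
      intro v hv hv'
      have h1 := (mem_ico v).mp (Mset_subset_y hyx hxy (by omega : j ≤ k) hv)
      have h2 := (mem_ico v).mp hv'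
      have := hyx j (by omega)
      omega

lemma inter_Mset {j : ℕ} (hj : j < k) :
    ico n 0 (x j) ∩ Mset n y x (j + 1) = Mset n y x j := by
  ext v
  rw [Finset.mem_inter, mem_ico, Mset_succ, Finset.mem_union, mem_ico]
  constructor
  · rintro ⟨⟨-, h1⟩, h2 | ⟨h3, -⟩⟩
    · exact h2
    · omega
  · intro hv
    exact ⟨⟨Nat.zero_le _, (mem_ico v).mp (Mset_subset_x hyx hxy hj hv) |>.2⟩, Or.inl hv⟩

lemma union_Mset {j : ℕ} (hj : j < k) :
    (ico n 0 (x j) \ Mset n y x j) ∪ Mset n y x (j + 1) = ico n 0 (y (j + 1)) := by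
  rw [Mset_succ, ← Finset.union_assoc, Finset.sdiff_union_self_eq_union,
    Finset.union_eq_left.mpr (Mset_subset_x hyx hxy hj)]
  ext v
  rw [Finset.mem_union, mem_ico, mem_ico, mem_ico]
  have := hxy j hj
  omega

lemma B_eq_Mset {j : ℕ} (hj : j < k) (B : F n)
    (hdisj : Disjoint (ico n 0 (x j) \ Mset n y x j) B)
    (hun : (ico n 0 (x j) \ Mset n y x j) ∪ B = ico n 0 (y (j + 1))) :
    B = Mset n y x (j + 1) := by
  have h1 : B = ico n 0 (y (j+1)) \ (ico n 0 (x j) \ Mset n y x j) := by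
    rw [← hun, Finset.union_sdiff_cancel_left hdisj]
  have h2 : Mset n y x (j+1) = ico n 0 (y (j+1)) \ (ico n 0 (x j) \ Mset n y x j) := by
    rw [← union_Mset hyx hxy hyn hj, Finset.union_sdiff_cancel_left]
    rw [Finset.disjoint_left]
    intro v hv hv'
    rw [Finset.mem_sdiff] at hv
    have := (inter_Mset hyx hxy hyn hj) ▸ Finset.mem_inter.mpr ⟨hv.1, hv'⟩
    exact hv.2 this
  rw [h1, h2]

lemma T_eq_Mset {j : ℕ} (hj : j < k) (T : F n) (hT : T ⊆ ico n 0 (x j))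
    (hcard : T.card = alphaF y x j) (hsub : Mset n y x j ⊆ T) : T = Mset n y x j :=
  ((Finset.eq_of_subset_of_card_le hsub (le_of_eq
    (hcard.trans (card_Mset hyx hxy hyn (le_of_lt hj)).symm))).symm)

omit hyx hxy hyn in
lemma disjoint_iff_subset {n' : ℕ} (S T B : Finset (Fin n')) (hT : T ⊆ S) :
    Disjoint (S \ T) B ↔ S ∩ B ⊆ T := by
  rw [Finset.disjoint_left]
  constructor
  · intro h v hv
    rw [Finset.mem_inter] at hv
    by_contra hvT
    exact h (Finset.mem_sdiff.mpr ⟨hv.1, hvT⟩) hv.2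
  · intro h v hv hvB
    rw [Finset.mem_sdiff] at hv
    exact hv.2 (h (Finset.mem_inter.mpr ⟨hv.1, hvB⟩))

omit hyn in
lemma x_le_x (hij : i ≤ j) (hj : j < k) : x i ≤ x j := by
  rcases eq_or_lt_of_le hij with rfl | hlt
  · exact le_refl _
  · calc x i ≤ y (i + 1) := le_of_lt (hxy i (by omega))
      _ ≤ y j := y_le_y hyx hxy (by omega) (by omega)
      _ ≤ x j := le_of_lt (hyx j hj)

omit hyx hxy hyn in
lemma ico_mono {n' a b b' : ℕ} (h : b ≤ b') : ico n' a b ⊆ ico n' a b' := by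
  intro v hv
  rw [mem_ico] at hv ⊢
  omega

lemma rung_eval {j : ℕ} (h : j + 1 < k + 1) (g : Fin (k+1) → F n)
    (hg : g ⟨j, Nat.lt_of_succ_lt h⟩ = ico n 0 (x j)) :
    atPos n (k+1) j (rungNE n (x j - alphaF y x j)) (Finsupp.single g 1) =
      ∑ T ∈ (ico n 0 (x j)).powersetCard (alphaF y x j),
        (if Disjoint (ico n 0 (x j) \ T) (g ⟨j+1, h⟩) then
          Finsupp.single
            (Function.update (Function.update g ⟨j, Nat.lt_of_succ_lt h⟩ T) ⟨j+1, h⟩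
              ((ico n 0 (x j) \ T) ∪ g ⟨j+1, h⟩))
            (Cf (x j - alphaF y x j) (ico n 0 (x j)) T (g ⟨j+1, h⟩))
         else 0) := by
  have hjk : j < k := by omega
  rw [atPos_rungNE_single n (k+1) j _ h g, hg]
  have hc : (ico n 0 (x j)).card - (x j - alphaF y x j) = alphaF y x j := by
    rw [card_ico (x_le_n hyx hxy hyn hjk)]
    have := alpha_le_x hyx hxy hjk
    omega
  rw [hc]

end ladder

lemma upd_eval_other {β : Type*} {N : ℕ} (g : Fin N → β) {j1 j2 m : ℕ}
    (h1 : j1 < N) (h2 : j2 < N) (hm : m < N) (T U : β) (hm1 : m ≠ j1) (hm2 : m ≠ j2) :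
    Function.update (Function.update g ⟨j1, h1⟩ T) ⟨j2, h2⟩ U ⟨m, hm⟩ = g ⟨m, hm⟩ := by
  rw [Function.update_of_ne (Fin.ne_of_val_ne hm2), Function.update_of_ne (Fin.ne_of_val_ne hm1)]

lemma upd_eval_fst {β : Type*} {N : ℕ} (g : Fin N → β) {j1 j2 : ℕ}
    (h1 : j1 < N) (h2 : j2 < N) (T U : β) (hne : j1 ≠ j2) :
    Function.update (Function.update g ⟨j1, h1⟩ T) ⟨j2, h2⟩ U ⟨j1, h1⟩ = T := by
  rw [Function.update_of_ne (Fin.ne_of_val_ne hne), Function.update_self]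

lemma upd_eval_snd {β : Type*} {N : ℕ} (g : Fin N → β) {j1 j2 : ℕ}
    (h1 : j1 < N) (h2 : j2 < N) (T U : β) :
    Function.update (Function.update g ⟨j1, h1⟩ T) ⟨j2, h2⟩ U ⟨j2, h2⟩ = U :=
  Function.update_self _ _ _

end
end Aux

/-- Evaluation of the elementary light ladder
`E = (R_1 ⊗ id^{⊗(k−1)}) ∘ ⋯ ∘ (id^{⊗(k−1)} ⊗ R_k) :
V_{x_1} ⊗ ⋯ ⊗ V_{x_k} ⊗ V_a → V_{y_1} ⊗ ⋯ ⊗ V_{y_{k+1}}`, `R_i = R^{NE}_{β_i}`, on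
dominant basis vectors `X ⊗ x_A` with `X = x_{[1,x_1]} ⊗ ⋯ ⊗ x_{[1,x_k]}`:
(i) if `|A ∩ [1,x_i]| > α_i` for some `i` then `E(X ⊗ x_A) = 0`;
(ii) `E(X ⊗ x_M) = ε q^z · x_{[1,y_1]} ⊗ ⋯ ⊗ x_{[1,y_{k+1}]}` for a sign `ε`, `z ∈ ℤ`;
(iii) if `A ≠ M` then the coefficient of `x_{[1,y_1]} ⊗ ⋯ ⊗ x_{[1,y_{k+1}]}` in `E(X ⊗ x_A)`
is zero. -/
theorem elementary_light_ladder_on_basis (n k : ℕ) (hn : 2 ≤ n) (y x : ℕ → ℕ)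
    (hyx : ∀ i < k, y i < x i) (hxy : ∀ i < k, x i < y (i + 1)) (hyn : y k ≤ n)
    (E : BigD n (k + 1) →ₗ[R] BigD n (k + 1))
    (hE : E = (List.finRange k).foldr
        (fun i acc => atPos n (k + 1) i (rungNE n (x i - alphaF y x i)) ∘ₗ acc)
        LinearMap.id)
    (M : Finset (Fin n))
    (hM : M = ico n 0 (y 0) ∪ (Finset.range k).biUnion (fun i => ico n (x i) (y (i + 1)))) :
    (∀ A : Finset (Fin n), A.card = alphaF y x k →
        (∃ i < k, alphaF y x i < (A ∩ ico n 0 (x i)).card) →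
        E (Finsupp.single
            (fun j : Fin (k + 1) => if (j : ℕ) < k then ico n 0 (x j) else A) 1) = 0) ∧
    (∃ ε z : ℤ, (ε = 1 ∨ ε = -1) ∧
        E (Finsupp.single
            (fun j : Fin (k + 1) => if (j : ℕ) < k then ico n 0 (x j) else M) 1)
          = Finsupp.single (fun j : Fin (k + 1) => ico n 0 (y j))
              (LaurentPolynomial.C ε * LaurentPolynomial.T z)) ∧
    (∀ A : Finset (Fin n), A.card = alphaF y x k → A ≠ M →
        (E (Finsupp.single
            (fun j : Fin (k + 1) => if (j : ℕ) < k then ico n 0 (x j) else A) 1))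
          (fun j : Fin (k + 1) => ico n 0 (y j)) = 0) := by
  classical
  have hMM : M = Mset n y x k := hM
  set P : ℕ → (BigD n (k+1) →ₗ[R] BigD n (k+1)) :=
    fun j => (((List.finRange k).map Fin.val).drop j).foldr
      (fun i acc => atPos n (k + 1) i (rungNE n (x i - alphaF y x i)) ∘ₗ acc)
      LinearMap.id with hP
  have hlen : ((List.finRange k).map Fin.val).length = k := by
    rw [List.length_map, List.length_finRange]
  have hP0 : P 0 = E := by
    rw [hE, hP]
    have hl : ((List.finRange k) >>= fun a => (pure (a.val) : List ℕ))
        = (List.finRange k).map Fin.val := by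
      rw [bind_pure_comp]; rfl
    simp only [List.drop_zero]
    rw [← hl]
  have hPk : P k = LinearMap.id := by
    rw [hP]
    have hd : List.drop k (List.map Fin.val (List.finRange k)) = [] :=
      List.drop_eq_nil_of_le (le_of_eq hlen)
    simp only [hd]
    rfl
  have hPstep : ∀ (j : ℕ), j < k →
      P j = atPos n (k + 1) j (rungNE n (x j - alphaF y x j)) ∘ₗ P (j + 1) := by
    intro j hj
    have hdrop : ((List.finRange k).map Fin.val).drop j
        = j :: ((List.finRange k).map Fin.val).drop (j + 1) := by
      rw [List.drop_eq_getElem_cons (by rw [hlen]; exact hj)]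
      congr 1
      rw [List.getElem_map, List.getElem_finRange]
      rfl
    rw [hP]
    simp only [hdrop, List.foldr_cons]
  refine ⟨?_, ?_, ?_⟩
  · -- part (i)
    rintro A hA ⟨i0, hi0k, hi0⟩
    set gA : Fin (k+1) → F n :=
      fun j : Fin (k + 1) => if (j : ℕ) < k then ico n 0 (x j) else A with hgA
    have key : ∀ j, i0 ≤ j → j ≤ k → ∀ g ∈ (P j (Finsupp.single gA 1)).support,
        (∀ (m : ℕ) (hm : m < k + 1), m < j → g ⟨m, hm⟩ = ico n 0 (x m)) ∧
        ∀ (hjk : j < k + 1), alphaF y x i0 < ((g ⟨j, hjk⟩) ∩ ico n 0 (x i0)).card := by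
      intro j
      induction' hd : k - j with d ih generalizing j
      · -- j = k
        intro hij hjk g hg
        have hjk' : k = j := by omega
        subst hjk'
        rw [hPk] at hg
        simp only [LinearMap.id_coe, id_eq] at hg
        have hgeq : g = gA := Finset.mem_singleton.mp (Finsupp.support_single_subset hg)
        subst hgeq
        constructor
        · intro m hm hmj
          show (if ((⟨m, hm⟩ : Fin (k+1)) : ℕ) < k then ico n 0 (x m) else A) = ico n 0 (x m)
          rw [if_pos (show m < k from hmj)]
        · intro hjk2
          show alphaF y x i0 <
            ((if ((⟨k, hjk2⟩ : Fin (k+1)) : ℕ) < k then ico n 0 (x k) else A) ∩ ico n 0 (x i0)).card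
          rw [if_neg (show ¬ (k < k) from lt_irrefl k)]
          exact hi0
      · -- step: k - j = d + 1, so j < k
        intro hij hjk g0 hg0
        have hjlt : j < k := by omega
        have pj : j < k + 1 := by omega
        have pj1 : j + 1 < k + 1 := by omega
        rw [hPstep j hjlt, LinearMap.comp_apply] at hg0
        revert g0 hg0
        refine support_transfer _ _ _ ?_
        intro g hgsup g' hg'
        obtain ⟨hpre, hcard⟩ := ih (j+1) (by omega) (by omega) (by omega) g hgsup
        have hgj : g ⟨j, Nat.lt_of_succ_lt pj1⟩ = ico n 0 (x j) := hpre j _ (by omega)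
        rw [rung_eval hyx hxy hyn pj1 g hgj] at hg'
        obtain ⟨T, hT, hmem⟩ := Finset.mem_biUnion.mp (Finsupp.support_finset_sum hg')
        obtain ⟨hTsub, hTcard⟩ := Finset.mem_powersetCard.mp hT
        by_cases hdisj : Disjoint (ico n 0 (x j) \ T) (g ⟨j+1, pj1⟩)
        swap
        · rw [if_neg hdisj] at hmem
          simp at hmem
        rw [if_pos hdisj] at hmem
        have hgeq : g' = Function.update (Function.update g ⟨j, Nat.lt_of_succ_lt pj1⟩ T)
            ⟨j+1, pj1⟩ ((ico n 0 (x j) \ T) ∪ g ⟨j+1, pj1⟩) :=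
          Finset.mem_singleton.mp (Finsupp.support_single_subset hmem)
        have hsubT : ico n 0 (x j) ∩ g ⟨j+1, pj1⟩ ⊆ T :=
          (disjoint_iff_subset _ _ _ hTsub).mp hdisj
        constructor
        · intro m hm hmj
          rw [hgeq]
          have e1 : Function.update (Function.update g ⟨j, Nat.lt_of_succ_lt pj1⟩ T)
              ⟨j+1, pj1⟩ ((ico n 0 (x j) \ T) ∪ g ⟨j+1, pj1⟩) ⟨m, hm⟩ = g ⟨m, hm⟩ :=
            upd_eval_other g _ _ hm _ _ (by omega) (by omega)
          rw [e1]
          exact hpre m hm (by omega)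
        · intro hjk2
          rw [hgeq]
          have e1 : Function.update (Function.update g ⟨j, Nat.lt_of_succ_lt pj1⟩ T)
              ⟨j+1, pj1⟩ ((ico n 0 (x j) \ T) ∪ g ⟨j+1, pj1⟩) ⟨j, hjk2⟩ = T :=
            upd_eval_fst g _ _ _ _ (by omega)
          rw [e1]
          have hsub2 : (g ⟨j+1, pj1⟩) ∩ ico n 0 (x i0) ⊆ T ∩ ico n 0 (x i0) := by
            intro v hv
            rw [Finset.mem_inter] at hv ⊢
            refine ⟨hsubT (Finset.mem_inter.mpr ⟨?_, hv.1⟩), hv.2⟩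
            exact ico_mono (x_le_x hyx hxy hij hjlt) hv.2
          calc alphaF y x i0 < ((g ⟨j+1, pj1⟩) ∩ ico n 0 (x i0)).card := hcard pj1
            _ ≤ (T ∩ ico n 0 (x i0)).card := Finset.card_le_card hsub2
    -- kill at i0
    have hzero : P i0 (Finsupp.single gA 1) = 0 := by
      have pj1 : i0 + 1 < k + 1 := by omega
      rw [hPstep i0 hi0k, LinearMap.comp_apply]
      refine apply_eq_zero_of_single _ _ ?_
      intro g hgsup
      obtain ⟨hpre, hcard⟩ := key (i0+1) (by omega) (by omega) g hgsup
      have hgj : g ⟨i0, Nat.lt_of_succ_lt pj1⟩ = ico n 0 (x i0) := hpre i0 _ (by omega)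
      rw [rung_eval hyx hxy hyn pj1 g hgj]
      refine Finset.sum_eq_zero (fun T hT => ?_)
      obtain ⟨hTsub, hTcard⟩ := Finset.mem_powersetCard.mp hT
      rw [if_neg]
      intro hdisj
      have hsubT : ico n 0 (x i0) ∩ g ⟨i0+1, pj1⟩ ⊆ T :=
        (disjoint_iff_subset _ _ _ hTsub).mp hdisj
      have h1 : (g ⟨i0+1, pj1⟩) ∩ ico n 0 (x i0) ⊆ T := by
        intro v hv
        rw [Finset.mem_inter] at hv
        exact hsubT (Finset.mem_inter.mpr ⟨hv.2, hv.1⟩)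
      have h2 := Finset.card_le_card h1
      have h3 := hcard pj1
      omega
    have hall : ∀ d, d ≤ i0 → P (i0 - d) (Finsupp.single gA 1) = 0 := by
      intro d
      induction d with
      | zero => intro _; simpa using hzero
      | succ d ihd =>
        intro hdle
        have h1 : i0 - (d+1) < k := by omega
        have h2 : i0 - (d+1) + 1 = i0 - d := by omega
        rw [hPstep _ h1, LinearMap.comp_apply, h2, ihd (by omega), map_zero]
    have hfin := hall i0 (le_refl i0)
    rw [Nat.sub_self] at hfin
    rw [← hP0]
    exact hfin
  · -- part (ii)
    set gM : Fin (k+1) → F n :=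
      fun j : Fin (k + 1) => if (j : ℕ) < k then ico n 0 (x j) else M with hgM
    set ht : ℕ → (Fin (k+1) → F n) := fun j => fun m : Fin (k+1) =>
      if (m : ℕ) < j then ico n 0 (x m) else if (m : ℕ) = j then Mset n y x j
      else ico n 0 (y m) with hht
    have key2 : ∀ j, j ≤ k → ∃ u : R, IsUnitMon u ∧
        P j (Finsupp.single gM 1) = u • Finsupp.single (ht j) (1:R) := by
      intro j
      induction' hd : k - j with d ih generalizing j
      · intro hjk
        have hjk' : k = j := by omega
        subst hjk'
        refine ⟨1, isUnitMon_one, ?_⟩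
        rw [hPk, one_smul]
        simp only [LinearMap.id_coe, id_eq]
        congr 1
        funext m
        rcases m with ⟨mv, hmv⟩
        show (if mv < k then ico n 0 (x mv) else M)
          = (if mv < k then ico n 0 (x mv) else if mv = k then Mset n y x k else ico n 0 (y mv))
        by_cases hmk : mv < k
        · rw [if_pos hmk, if_pos hmk]
        · rw [if_neg hmk, if_neg hmk, if_pos (by omega : mv = k), hMM]
      · intro hjk
        have hjlt : j < k := by omega
        have pj1 : j + 1 < k + 1 := by omega
        obtain ⟨u, hu, heq⟩ := ih (j+1) (by omega) (by omega)
        have hgj : ht (j+1) ⟨j, Nat.lt_of_succ_lt pj1⟩ = ico n 0 (x j) := by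
          show (if j < j + 1 then ico n 0 (x j) else _) = ico n 0 (x j)
          rw [if_pos (by omega : j < j + 1)]
        have hgj1 : ht (j+1) ⟨j+1, pj1⟩ = Mset n y x (j+1) := by
          show (if j + 1 < j + 1 then _ else if j + 1 = j + 1 then Mset n y x (j+1) else _)
            = Mset n y x (j+1)
          rw [if_neg (by omega : ¬ (j + 1 < j + 1)), if_pos rfl]
        rw [hPstep j hjlt, LinearMap.comp_apply, heq, map_smul,
          rung_eval hyx hxy hyn pj1 (ht (j+1)) hgj, hgj1]
        have hsum : (∑ T ∈ (ico n 0 (x j)).powersetCard (alphaF y x j),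
            if Disjoint (ico n 0 (x j) \ T) (Mset n y x (j+1)) then
              Finsupp.single
                (Function.update (Function.update (ht (j+1)) ⟨j, Nat.lt_of_succ_lt pj1⟩ T)
                  ⟨j+1, pj1⟩ ((ico n 0 (x j) \ T) ∪ Mset n y x (j+1)))
                (Cf (x j - alphaF y x j) (ico n 0 (x j)) T (Mset n y x (j+1)))
            else 0)
            = Finsupp.single (ht j)
                (Cf (x j - alphaF y x j) (ico n 0 (x j)) (Mset n y x j) (Mset n y x (j+1))) := by
          rw [Finset.sum_eq_single_of_mem (Mset n y x j)]
          · have hdisj : Disjoint (ico n 0 (x j) \ Mset n y x j) (Mset n y x (j+1)) :=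
              (disjoint_iff_subset _ _ _ (Mset_subset_x hyx hxy hjlt)).mpr
                (le_of_eq (inter_Mset hyx hxy hyn hjlt))
            rw [if_pos hdisj]
            congr 1
            funext m
            rcases m with ⟨mv, hmv⟩
            by_cases h1 : mv < j
            · have e1 := upd_eval_other (ht (j+1)) (Nat.lt_of_succ_lt pj1) pj1 hmv
                (Mset n y x j) ((ico n 0 (x j) \ Mset n y x j) ∪ Mset n y x (j+1))
                (by omega) (by omega)
              rw [e1]
              show (if mv < j + 1 then ico n 0 (x mv) else _)
                = (if mv < j then ico n 0 (x mv) else _)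
              rw [if_pos (by omega : mv < j + 1), if_pos h1]
            · by_cases h2 : mv = j
              · subst h2
                have e1 := upd_eval_fst (ht (mv+1)) (Nat.lt_of_succ_lt pj1) pj1
                  (Mset n y x mv) ((ico n 0 (x mv) \ Mset n y x mv) ∪ Mset n y x (mv+1))
                  (by omega)
                rw [e1]
                show Mset n y x mv
                  = (if mv < mv then _ else if mv = mv then Mset n y x mv else _)
                rw [if_neg (lt_irrefl mv), if_pos rfl]
              · by_cases h3 : mv = j + 1
                · subst h3
                  have e1 := upd_eval_snd (ht (j+1)) (Nat.lt_of_succ_lt pj1) hmv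
                    (Mset n y x j) ((ico n 0 (x j) \ Mset n y x j) ∪ Mset n y x (j+1))
                  rw [e1, union_Mset hyx hxy hyn hjlt]
                  show ico n 0 (y (j+1))
                    = (if j + 1 < j then _ else if j + 1 = j then _ else ico n 0 (y (j+1)))
                  rw [if_neg (by omega : ¬ (j + 1 < j)), if_neg (by omega : ¬ (j + 1 = j))]
                · have e1 := upd_eval_other (ht (j+1)) (Nat.lt_of_succ_lt pj1) pj1 hmv
                    (Mset n y x j) ((ico n 0 (x j) \ Mset n y x j) ∪ Mset n y x (j+1))
                    h2 h3
                  rw [e1]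
                  show (if mv < j + 1 then _ else if mv = j + 1 then _ else ico n 0 (y mv))
                    = (if mv < j then _ else if mv = j then _ else ico n 0 (y mv))
                  rw [if_neg (by omega : ¬ (mv < j + 1)), if_neg h3,
                    if_neg (by omega : ¬ (mv < j)), if_neg h2]
          · exact Finset.mem_powersetCard.mpr
              ⟨Mset_subset_x hyx hxy hjlt, card_Mset hyx hxy hyn (le_of_lt hjlt)⟩
          · intro T hT hTne
            obtain ⟨hTsub, hTcard⟩ := Finset.mem_powersetCard.mp hT
            by_cases hdisj : Disjoint (ico n 0 (x j) \ T) (Mset n y x (j+1))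
            · exfalso
              refine hTne (T_eq_Mset hyx hxy hyn hjlt T hTsub hTcard ?_)
              have := (disjoint_iff_subset _ _ _ hTsub).mp hdisj
              rw [inter_Mset hyx hxy hyn hjlt] at this
              exact this
            · rw [if_neg hdisj]
        rw [hsum]
        refine ⟨u * Cf (x j - alphaF y x j) (ico n 0 (x j)) (Mset n y x j) (Mset n y x (j+1)),
          hu.mul (isUnitMon_Cf _ _ _ _), ?_⟩
        simp [Finsupp.smul_single, smul_eq_mul]
    obtain ⟨u, hu, heq⟩ := key2 0 (Nat.zero_le k)
    obtain ⟨e, z, he, rfl⟩ := hu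
    refine ⟨e, z, he, ?_⟩
    rw [← hP0, heq]
    have hht0 : ht 0 = fun m : Fin (k+1) => ico n 0 (y m) := by
      funext m
      rcases m with ⟨mv, hmv⟩
      show (if mv < 0 then _ else if mv = 0 then Mset n y x 0 else ico n 0 (y mv))
        = ico n 0 (y mv)
      by_cases h0 : mv = 0
      · subst h0
        rw [if_neg (by omega : ¬ (0:ℕ) < 0), if_pos rfl, Mset_zero]
      · rw [if_neg (by omega : ¬ mv < 0), if_neg h0]
    rw [hht0, Finsupp.smul_single, smul_eq_mul, mul_one]
  · -- part (iii)
    intro A hA hAne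
    set gA : Fin (k+1) → F n :=
      fun j : Fin (k + 1) => if (j : ℕ) < k then ico n 0 (x j) else A with hgA
    have key3 : ∀ j, j ≤ k → ∀ g ∈ (P j (Finsupp.single gA 1)).support,
        (∀ (m : ℕ) (hm : m < k + 1), m < j → g ⟨m, hm⟩ = ico n 0 (x m)) ∧
        ∀ (hjk : j < k + 1), g ⟨j, hjk⟩ ≠ Mset n y x j ∨
          ∃ (m : ℕ) (hm : m < k + 1), j < m ∧ g ⟨m, hm⟩ ≠ ico n 0 (y m) := by
      intro j
      induction' hd : k - j with d ih generalizing j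
      · intro hjk g hg
        have hjk' : k = j := by omega
        subst hjk'
        rw [hPk] at hg
        simp only [LinearMap.id_coe, id_eq] at hg
        have hgeq : g = gA := Finset.mem_singleton.mp (Finsupp.support_single_subset hg)
        subst hgeq
        constructor
        · intro m hm hmj
          show (if ((⟨m, hm⟩ : Fin (k+1)) : ℕ) < k then ico n 0 (x m) else A) = ico n 0 (x m)
          rw [if_pos (show m < k from hmj)]
        · intro hjk2
          left
          show (if ((⟨k, hjk2⟩ : Fin (k+1)) : ℕ) < k then ico n 0 (x k) else A) ≠ Mset n y x k
          rw [if_neg (show ¬ (k < k) from lt_irrefl k), ← hMM]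
          exact hAne
      · intro hjk g0 hg0
        have hjlt : j < k := by omega
        have pj1 : j + 1 < k + 1 := by omega
        rw [hPstep j hjlt, LinearMap.comp_apply] at hg0
        revert g0 hg0
        refine support_transfer _ _ _ ?_
        intro g hgsup g' hg'
        obtain ⟨hpre, hbad⟩ := ih (j+1) (by omega) (by omega) g hgsup
        have hgj : g ⟨j, Nat.lt_of_succ_lt pj1⟩ = ico n 0 (x j) := hpre j _ (by omega)
        rw [rung_eval hyx hxy hyn pj1 g hgj] at hg'
        obtain ⟨T, hT, hmem⟩ := Finset.mem_biUnion.mp (Finsupp.support_finset_sum hg')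
        obtain ⟨hTsub, hTcard⟩ := Finset.mem_powersetCard.mp hT
        by_cases hdisj : Disjoint (ico n 0 (x j) \ T) (g ⟨j+1, pj1⟩)
        swap
        · rw [if_neg hdisj] at hmem
          simp at hmem
        rw [if_pos hdisj] at hmem
        have hgeq : g' = Function.update (Function.update g ⟨j, Nat.lt_of_succ_lt pj1⟩ T)
            ⟨j+1, pj1⟩ ((ico n 0 (x j) \ T) ∪ g ⟨j+1, pj1⟩) :=
          Finset.mem_singleton.mp (Finsupp.support_single_subset hmem)
        constructor
        · intro m hm hmj
          rw [hgeq]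
          have e1 : Function.update (Function.update g ⟨j, Nat.lt_of_succ_lt pj1⟩ T)
              ⟨j+1, pj1⟩ ((ico n 0 (x j) \ T) ∪ g ⟨j+1, pj1⟩) ⟨m, hm⟩ = g ⟨m, hm⟩ :=
            upd_eval_other g _ _ hm _ _ (by omega) (by omega)
          rw [e1]
          exact hpre m hm (by omega)
        · intro hjk2
          by_contra hcon
          push_neg at hcon
          obtain ⟨hTM, hrest⟩ := hcon
          have egj : g' ⟨j, hjk2⟩ = T := by
            rw [hgeq]
            exact upd_eval_fst g _ _ _ _ (by omega)
          rw [egj] at hTM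
          have egj1 : g' ⟨j+1, pj1⟩ = (ico n 0 (x j) \ T) ∪ g ⟨j+1, pj1⟩ := by
            rw [hgeq]
            exact upd_eval_snd g _ _ _ _
          have hU : (ico n 0 (x j) \ T) ∪ g ⟨j+1, pj1⟩ = ico n 0 (y (j+1)) := by
            rw [← egj1]
            exact hrest (j+1) pj1 (by omega)
          subst hTM
          have hB : g ⟨j+1, pj1⟩ = Mset n y x (j+1) :=
            B_eq_Mset hyx hxy hyn hjlt _ hdisj hU
          rcases hbad pj1 with hb | ⟨m, hm, hmgt, hb⟩
          · exact hb hB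
          · refine hb ?_
            have e1 : g' ⟨m, hm⟩ = g ⟨m, hm⟩ := by
              rw [hgeq]
              exact upd_eval_other g _ _ hm _ _ (by omega) (by omega)
            rw [← e1]
            exact hrest m hm (by omega)
    rw [← hP0]
    rw [← Finsupp.notMem_support_iff]
    intro hmem
    obtain ⟨-, hbad⟩ := key3 0 (Nat.zero_le k) _ hmem
    rcases hbad (by omega) with hb | ⟨m, hm, hmgt, hb⟩
    · refine hb ?_
      show ico n 0 (y 0) = Mset n y x 0
      rw [Mset_zero]
    · exact hb rfl
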